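/- arXiv:2303.14899 — 2 statements merged into one kernel-verified Lean document; each statement's English description precedes it below -/
import Mathlib

section
/- Let P be a two-dimensional convex lattice polygon with at least 4 lattice points, and let v be a vertex of P. If the polygon P_v := conv((P ∩ ℤ²) \ {v}) is still two-dimensional, then |P_v ∩ ℤ²| = |P ∩ ℤ²| − 1. -/
def IsLatticePolygon (P : Set (Fin 2 → ℝ)) : Prop :=
  (∃ s : Finset (Fin 2 → ℤ),
    P = convexHull ℝ ((fun v : Fin 2 → ℤ => fun i => (v i : ℝ)) '' (s : Set (Fin 2 → ℤ)))) ∧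
  (interior P).Nonempty

def latticePts (P : Set (Fin 2 → ℝ)) : Set (Fin 2 → ℝ) :=
  {x ∈ P | ∀ i, ∃ z : ℤ, x i = (z : ℝ)}

/-!
Every lattice point of `P` other than the vertex `v` survives in `conv((P ∩ ℤ²) \ {v})`, and
`v` does not, since an extreme point of a convex set never lies in the convex hull of the
set's other points.
-/

open Set

lemma latticePts_mono {P Q : Set (Fin 2 → ℝ)} (h : P ⊆ Q) : latticePts P ⊆ latticePts Q :=
  fun _ hx => ⟨h hx.1, hx.2⟩

lemma extremePoints_convexHull_lattice_subset_latticePts (s : Set (Fin 2 → ℤ)) :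
    extremePoints ℝ (convexHull ℝ ((fun z : Fin 2 → ℤ => fun i => (z i : ℝ)) '' s)) ⊆
      latticePts (convexHull ℝ ((fun z : Fin 2 → ℤ => fun i => (z i : ℝ)) '' s)) := by
  intro v hv
  obtain ⟨z, hz, rfl⟩ := extremePoints_convexHull_subset hv
  exact ⟨subset_convexHull ℝ _ ⟨z, hz, rfl⟩, fun i => ⟨z i, rfl⟩⟩

lemma latticePts_convexHull_latticePts_sdiff_extremePoint {P : Set (Fin 2 → ℝ)}
    (hP : Convex ℝ P) {v : Fin 2 → ℝ} (hv : v ∈ extremePoints ℝ P) :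
    latticePts (convexHull ℝ (latticePts P \ {v})) = latticePts P \ {v} := by
  have hsub : convexHull ℝ (latticePts P \ {v}) ⊆ P :=
    convexHull_min (sdiff_subset.trans (sep_subset _ _)) hP
  have hv_notMem : v ∉ convexHull ℝ (latticePts P \ {v}) := fun h =>
    ((hP.mem_extremePoints_iff_mem_sdiff_convexHull_sdiff.1 hv).2)
      (convexHull_mono (sdiff_subset_sdiff_left (sep_subset _ _)) h)
  apply Subset.antisymm
  · intro x hx
    exact ⟨latticePts_mono hsub hx, fun hxv => hv_notMem (hxv ▸ hx.1)⟩
  · intro x hx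
    exact ⟨subset_convexHull ℝ _ hx, hx.1.2⟩

theorem stmt_10_general (P : Set (Fin 2 → ℝ)) (hP : IsLatticePolygon P)
    (v : Fin 2 → ℝ) (hv : v ∈ Set.extremePoints ℝ P)
    (Pv : Set (Fin 2 → ℝ)) (hPv : Pv = convexHull ℝ (latticePts P \ {v})) :
    (latticePts Pv).ncard = (latticePts P).ncard - 1 := by
  obtain ⟨⟨s, rfl⟩, -⟩ := hP
  rw [hPv, latticePts_convexHull_latticePts_sdiff_extremePoint (convex_convexHull ℝ _) hv,
    ncard_sdiff_singleton_of_mem (extremePoints_convexHull_lattice_subset_latticePts _ hv)]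

theorem stmt_10 (P : Set (Fin 2 → ℝ)) (hP : IsLatticePolygon P)
    (hcard : 4 ≤ (latticePts P).ncard)
    (v : Fin 2 → ℝ) (hv : v ∈ Set.extremePoints ℝ P)
    (Pv : Set (Fin 2 → ℝ)) (hPv : Pv = convexHull ℝ (latticePts P \ {v}))
    (hdim : (interior Pv).Nonempty) :
    (latticePts Pv).ncard = (latticePts P).ncard - 1 :=
  stmt_10_general P hP v hv Pv hPv
end

section
/- Let P and Q be two-dimensional convex lattice polygons with Q ⊆ P and Q ≠ P (as sets of lattice points). Then there exists a vertex v of P not contained in Q, and for any such v, Q ⊆ conv((P ∩ ℤ²) \ {v}). -/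
/-! A vertex of `P` outside `Q` exists because otherwise Krein–Milman gives `P ⊆ Q`, hence equal
lattice points. For the second claim, `Q` is the convex hull of lattice points of `Q`; these lie
in `P`, and none equals `v` since `v ∉ Q`. -/

theorem IsCompact.subset_of_extremePoints_subset {E : Type*} [AddCommGroup E] [Module ℝ E]
    [TopologicalSpace E] [T2Space E] [IsTopologicalAddGroup E] [ContinuousSMul ℝ E]
    [LocallyConvexSpace ℝ E] {P Q : Set E} (hPcomp : IsCompact P) (hPconv : Convex ℝ P)
    (hQclosed : IsClosed Q) (hQconv : Convex ℝ Q) (h : P.extremePoints ℝ ⊆ Q) : P ⊆ Q :=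
  calc P = closure (convexHull ℝ (P.extremePoints ℝ)) :=
        (closure_convexHull_extremePoints hPcomp hPconv).symm
    _ ⊆ Q := closure_minimal (convexHull_min h hQconv) hQclosed

namespace IsLatticePolygon

variable {P : Set (Fin 2 → ℝ)}

theorem convex (hP : IsLatticePolygon P) : Convex ℝ P := by
  obtain ⟨⟨s, rfl⟩, -⟩ := hP
  exact convex_convexHull ℝ _

theorem isCompact (hP : IsLatticePolygon P) : IsCompact P := by
  obtain ⟨⟨s, rfl⟩, -⟩ := hP
  exact (s.finite_toSet.image _).isCompact_convexHull (𝕜 := ℝ)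

theorem subset_convexHull_latticePts (hP : IsLatticePolygon P) :
    P ⊆ convexHull ℝ (latticePts P) := by
  obtain ⟨⟨s, hs⟩, -⟩ := hP
  have hgen : (fun v : Fin 2 → ℤ => fun i => (v i : ℝ)) '' (s : Set (Fin 2 → ℤ)) ⊆
      latticePts P := by
    rintro _ ⟨z, hz, rfl⟩
    exact ⟨hs ▸ subset_convexHull ℝ _ ⟨z, hz, rfl⟩, fun i => ⟨z i, rfl⟩⟩
  exact hs.subset.trans (convexHull_mono hgen)

end IsLatticePolygon

theorem stmt_11 (P Q : Set (Fin 2 → ℝ)) (hP : IsLatticePolygon P)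
    (hQ : IsLatticePolygon Q) (hsub : Q ⊆ P)
    (hne : latticePts Q ≠ latticePts P) :
    (∃ v ∈ Set.extremePoints ℝ P, v ∉ Q) ∧
    ∀ v ∈ Set.extremePoints ℝ P, v ∉ Q → Q ⊆ convexHull ℝ (latticePts P \ {v}) := by
  refine ⟨?_, fun v _ hvQ => ?_⟩
  · by_contra! h
    have hPQ : P ⊆ Q := hP.isCompact.subset_of_extremePoints_subset hP.convex
      hQ.isCompact.isClosed hQ.convex h
    exact hne (congrArg latticePts (hsub.antisymm hPQ))
  · calc Q ⊆ convexHull ℝ (latticePts Q) := hQ.subset_convexHull_latticePts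
      _ ⊆ convexHull ℝ (latticePts P \ {v}) := convexHull_mono fun x hx =>
          ⟨⟨hsub hx.1, hx.2⟩, by rintro rfl; exact hvQ hx.1⟩
end
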